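/- arXiv:1607.00289 — 2 statements merged into one kernel-verified Lean document; each statement's English description precedes it below -/
import Mathlib

section
/- Let T : H₁ → H₂ be an unbounded, densely defined, closed operator between separable Hilbert spaces with closed range. Then the range of T* ∘ T equals the range of T*, and in particular the range of T* ∘ T is closed in H₁. -/
namespace Paper

/-- Composition `S ∘ T` of partially defined (unbounded) linear maps, with domain
`{x ∈ dom T | T x ∈ dom S}` and value `S (T x)`. -/
noncomputable def pcomp {R E F G : Type*} [Ring R] [AddCommGroup E] [Module R E]
    [AddCommGroup F] [Module R F] [AddCommGroup G] [Module R G]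
    (S : F →ₗ.[R] G) (T : E →ₗ.[R] F) : E →ₗ.[R] G where
  domain := (S.domain.comap T.toFun).map T.domain.subtype
  toFun :=
    (S.toFun.comp (((T.toFun.comp (S.domain.comap T.toFun).subtype)).codRestrict S.domain
      fun c => c.2)).comp
      (Submodule.equivMapOfInjective T.domain.subtype (Submodule.injective_subtype T.domain)
        (S.domain.comap T.toFun)).symm.toLinearMap
/-- The range (image) of a partially defined linear map. -/
def pran {R E F : Type*} [Ring R] [AddCommGroup E] [Module R E] [AddCommGroup F] [Module R F]
    (T : E →ₗ.[R] F) : Set F :=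
  Set.range fun x : T.domain => T x

/-- The kernel of a partially defined linear map, as a subset of the ambient space. -/
def pker {R E F : Type*} [Ring R] [AddCommGroup E] [Module R E] [AddCommGroup F] [Module R F]
    (T : E →ₗ.[R] F) : Set E :=
  {x | ∃ h : x ∈ T.domain, T ⟨x, h⟩ = 0}

/-!
Split `y ∈ dom T*` along `H₂ = im T ⊕ (im T)ᗮ`. The second summand lies in `ker T*`, so
`T* y = T* (T x)` where `T x` is the first one; hence `im (T* T) = im T*`. For closedness one
shows `im T* = (ker T)ᗮ`: for `u ⊥ ker T` the functional `T x ↦ ⟪u, x⟫` on the Hilbert space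
`im T` is well defined, and bounded by the open mapping theorem applied to the projection of the
closed graph of `T` onto `im T`; its Riesz representative `y` satisfies `T* y = u`.
-/

theorem ContinuousLinearMap.exists_comp_eq_of_ker_le {𝕜 E F G : Type*}
    [NontriviallyNormedField 𝕜]
    [NormedAddCommGroup E] [NormedSpace 𝕜 E] [CompleteSpace E]
    [NormedAddCommGroup F] [NormedSpace 𝕜 F] [CompleteSpace F]
    [NormedAddCommGroup G] [NormedSpace 𝕜 G]
    {f : E →L[𝕜] F} (hf : Function.Surjective f) (φ : E →L[𝕜] G)
    (hker : LinearMap.ker (f : E →ₗ[𝕜] F) ≤ LinearMap.ker (φ : E →ₗ[𝕜] G)) :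
    ∃ ψ : F →L[𝕜] G, ∀ x, ψ (f x) = φ x := by
  let e := (f : E →ₗ[𝕜] F).quotKerEquivOfSurjective hf
  let ψ : F →ₗ[𝕜] G := ((LinearMap.ker (f : E →ₗ[𝕜] F)).liftQ φ hker).comp e.symm.toLinearMap
  have hψ (x : E) : ψ (f x) = φ x := by
    have he : e (Submodule.Quotient.mk x) = f x := rfl
    simp only [ψ, LinearMap.comp_apply, LinearEquiv.coe_coe, ← he, LinearEquiv.symm_apply_apply]
    rfl
  obtain ⟨C, -, hC⟩ := f.exists_preimage_norm_le hf
  refine ⟨ψ.mkContinuous (‖φ‖ * C) fun y => ?_, hψ⟩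
  obtain ⟨x, rfl, hx⟩ := hC y
  calc ‖ψ (f x)‖ = ‖φ x‖ := by rw [hψ]
    _ ≤ ‖φ‖ * ‖x‖ := φ.le_opNorm x
    _ ≤ ‖φ‖ * (C * ‖f x‖) := by gcongr
    _ = ‖φ‖ * C * ‖f x‖ := by ring

section Composition

variable {R E F G : Type*} [Ring R] [AddCommGroup E] [Module R E]
  [AddCommGroup F] [Module R F] [AddCommGroup G] [Module R G]

theorem mem_pcomp_domain {S : F →ₗ.[R] G} {T : E →ₗ.[R] F} {x : E} :
    x ∈ (pcomp S T).domain ↔ ∃ hx : x ∈ T.domain, T ⟨x, hx⟩ ∈ S.domain := by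
  simp only [pcomp, Submodule.mem_map, Submodule.mem_comap]
  constructor
  · rintro ⟨y, hy, rfl⟩
    exact ⟨y.2, hy⟩
  · rintro ⟨hx, hTx⟩
    exact ⟨⟨x, hx⟩, hTx, rfl⟩

theorem pcomp_apply (S : F →ₗ.[R] G) (T : E →ₗ.[R] F) {x : E} (hx : x ∈ T.domain)
    (hTx : T ⟨x, hx⟩ ∈ S.domain) (hm : x ∈ (pcomp S T).domain) :
    pcomp S T ⟨x, hm⟩ = S ⟨T ⟨x, hx⟩, hTx⟩ := by
  change S.toFun _ = S.toFun _
  set e := Submodule.equivMapOfInjective T.domain.subtype (Submodule.injective_subtype T.domain)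
    (S.domain.comap T.toFun)
  have hsymm : (e.symm ⟨x, hm⟩ : T.domain) = ⟨x, hx⟩ := by
    have h := congrArg Subtype.val (e.apply_symm_apply ⟨x, hm⟩)
    exact Subtype.ext h
  exact congrArg S.toFun (Subtype.ext (congrArg T.toFun hsymm))

theorem pran_pcomp_subset (S : F →ₗ.[R] G) (T : E →ₗ.[R] F) : pran (pcomp S T) ⊆ pran S := by
  rintro _ ⟨⟨x, hm⟩, rfl⟩
  obtain ⟨hx, hTx⟩ := mem_pcomp_domain.mp hm
  exact ⟨⟨T ⟨x, hx⟩, hTx⟩, (pcomp_apply S T hx hTx hm).symm⟩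

end Composition

section Adjoint

open LinearPMap
open scoped InnerProductSpace

variable {𝕜 E F : Type*} [RCLike 𝕜]
  [NormedAddCommGroup E] [InnerProductSpace 𝕜 E] [CompleteSpace E]
  [NormedAddCommGroup F] [InnerProductSpace 𝕜 F]
  {T : E →ₗ.[𝕜] F}

theorem mem_adjoint_domain_of_mem_orthogonal_range {w : F}
    (hw : w ∈ (LinearMap.range T.toFun)ᗮ) : w ∈ T†.domain :=
  mem_adjoint_domain_of_exists w ⟨0, fun x => by
    rw [inner_zero_left]
    exact (Submodule.inner_left_of_mem_orthogonal (LinearMap.mem_range_self _ x) hw).symm⟩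

theorem adjoint_apply_eq_zero_of_mem_orthogonal_range (hT : Dense (T.domain : Set E))
    (w : T†.domain) (hw : (w : F) ∈ (LinearMap.range T.toFun)ᗮ) : T† w = 0 :=
  adjoint_apply_eq hT w fun x => by
    rw [inner_zero_left]
    exact (Submodule.inner_left_of_mem_orthogonal (LinearMap.mem_range_self _ x) hw).symm

theorem pran_adjoint_subset_pran_pcomp (hT : Dense (T.domain : Set E))
    [(LinearMap.range T.toFun).HasOrthogonalProjection] : pran T† ⊆ pran (pcomp T† T) := by
  rintro _ ⟨⟨y, hy⟩, rfl⟩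
  obtain ⟨_, ⟨x, rfl⟩, w, hw, rfl⟩ := (LinearMap.range T.toFun).exists_add_mem_mem_orthogonal y
  have hwD : w ∈ T†.domain := mem_adjoint_domain_of_mem_orthogonal_range hw
  have hTx : T x ∈ T†.domain := by simpa using T†.domain.sub_mem hy hwD
  have hm : (x : E) ∈ (pcomp T† T).domain := mem_pcomp_domain.mpr ⟨x.2, hTx⟩
  refine ⟨⟨x, hm⟩, ?_⟩
  change pcomp T† T ⟨x, hm⟩ = T† ⟨T x + w, hy⟩
  have hsplit : (⟨T x + w, hy⟩ : T†.domain) = ⟨T x, hTx⟩ + ⟨w, hwD⟩ := rfl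
  rw [pcomp_apply _ _ x.2 hTx hm, hsplit, LinearPMap.map_add,
    adjoint_apply_eq_zero_of_mem_orthogonal_range hT ⟨w, hwD⟩ hw, add_zero]

theorem pran_adjoint_subset_orthogonal_ker (hT : Dense (T.domain : Set E)) :
    pran T† ⊆ ((LinearMap.ker T.toFun).map T.domain.subtype)ᗮ := by
  rintro _ ⟨y, rfl⟩
  rw [SetLike.mem_coe, Submodule.mem_orthogonal]
  rintro _ ⟨x, hx, rfl⟩
  change ⟪(x : E), T† y⟫_𝕜 = 0
  rw [← inner_conj_symm, adjoint_isFormalAdjoint hT y x]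
  change (starRingEnd 𝕜) ⟪(y : F), T.toFun x⟫_𝕜 = 0
  rw [LinearMap.mem_ker.mp hx, inner_zero_right, _root_.map_zero]

theorem exists_inner_eq_of_mem_orthogonal_ker [CompleteSpace F] (hcl : T.IsClosed)
    (hran : IsClosed (pran T)) {u : E} (hu : u ∈ ((LinearMap.ker T.toFun).map T.domain.subtype)ᗮ) :
    ∃ y : F, ∀ x : T.domain, ⟪y, T x⟫_𝕜 = ⟪u, (x : E)⟫_𝕜 := by
  set K := LinearMap.range T.toFun
  have : CompleteSpace K := hran.completeSpace_coe
  have : CompleteSpace T.graph := hcl.completeSpace_coe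
  have hsndK (g : T.graph) : (g : E × F).2 ∈ K := by
    obtain ⟨x, -, hx⟩ := T.mem_graph_iff.mp g.2
    exact ⟨x, hx⟩
  let f : T.graph →L[𝕜] K :=
    ((ContinuousLinearMap.snd 𝕜 E F).comp T.graph.subtypeL).codRestrict K hsndK
  have hf : Function.Surjective f := by
    rintro ⟨_, x, rfl⟩
    exact ⟨⟨(x, T x), T.mem_graph x⟩, rfl⟩
  let φ : T.graph →L[𝕜] 𝕜 :=
    (innerSL 𝕜 u).comp ((ContinuousLinearMap.fst 𝕜 E F).comp T.graph.subtypeL)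
  have hker : LinearMap.ker (f : T.graph →ₗ[𝕜] K) ≤ LinearMap.ker (φ : T.graph →ₗ[𝕜] 𝕜) := by
    intro g hg
    obtain ⟨x, hx1, hx2⟩ := T.mem_graph_iff.mp g.2
    have hxker : T.toFun x = 0 := hx2.trans (congrArg Subtype.val hg)
    have hmem : (g : E × F).1 ∈ (LinearMap.ker T.toFun).map T.domain.subtype :=
      ⟨x, hxker, hx1⟩
    exact Submodule.inner_left_of_mem_orthogonal hmem hu
  obtain ⟨ψ, hψ⟩ := ContinuousLinearMap.exists_comp_eq_of_ker_le hf φ hker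
  refine ⟨(InnerProductSpace.toDual 𝕜 K).symm ψ, fun x => ?_⟩
  calc ⟪((InnerProductSpace.toDual 𝕜 K).symm ψ : F), T x⟫_𝕜
      = ⟪(InnerProductSpace.toDual 𝕜 K).symm ψ, f ⟨(x, T x), T.mem_graph x⟩⟫_𝕜 := rfl
    _ = φ ⟨(x, T x), T.mem_graph x⟩ := by rw [InnerProductSpace.toDual_symm_apply, hψ]
    _ = ⟪u, (x : E)⟫_𝕜 := rfl

theorem mem_pran_adjoint_of_inner_eq (hT : Dense (T.domain : Set E)) {u : E} {y : F}
    (h : ∀ x : T.domain, ⟪y, T x⟫_𝕜 = ⟪u, (x : E)⟫_𝕜) : u ∈ pran T† :=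
  ⟨⟨y, mem_adjoint_domain_of_exists y ⟨u, fun x => (h x).symm⟩⟩,
    adjoint_apply_eq hT _ fun x => (h x).symm⟩

theorem pran_adjoint_eq_orthogonal_ker [CompleteSpace F] (hT : Dense (T.domain : Set E))
    (hcl : T.IsClosed) (hran : IsClosed (pran T)) :
    pran T† = ((LinearMap.ker T.toFun).map T.domain.subtype)ᗮ := by
  refine (pran_adjoint_subset_orthogonal_ker hT).antisymm fun u hu => ?_
  obtain ⟨y, hy⟩ := exists_inner_eq_of_mem_orthogonal_ker hcl hran hu
  exact mem_pran_adjoint_of_inner_eq hT hy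

theorem pran_pcomp_adjoint_self [CompleteSpace F] (hT : Dense (T.domain : Set E))
    (hran : IsClosed (pran T)) : pran (pcomp T† T) = pran T† :=
  haveI : CompleteSpace (LinearMap.range T.toFun) := hran.completeSpace_coe
  (pran_pcomp_subset _ _).antisymm (pran_adjoint_subset_pran_pcomp hT)

end Adjoint

theorem stmt0_general {H₁ H₂ : Type*}
    [NormedAddCommGroup H₁] [InnerProductSpace ℂ H₁] [CompleteSpace H₁]
    [NormedAddCommGroup H₂] [InnerProductSpace ℂ H₂] [CompleteSpace H₂]
    (T : H₁ →ₗ.[ℂ] H₂) (hdense : Dense (T.domain : Set H₁)) (hclosed : T.IsClosed)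
    (hran : IsClosed (pran T)) :
    pran (pcomp T.adjoint T) = pran T.adjoint ∧ IsClosed (pran (pcomp T.adjoint T)) := by
  have hcomp := pran_pcomp_adjoint_self hdense hran
  refine ⟨hcomp, ?_⟩
  rw [hcomp, pran_adjoint_eq_orthogonal_ker hdense hclosed hran]
  exact Submodule.isClosed_orthogonal _

/-- If `T : H₁ → H₂` is an unbounded, densely defined, closed operator between
separable Hilbert spaces with closed range, then `im (T† ∘ T) = im T†`; in particular
`im (T† ∘ T)` is closed in `H₁`. -/
theorem stmt0 {H₁ H₂ : Type*}
    [NormedAddCommGroup H₁] [InnerProductSpace ℂ H₁] [CompleteSpace H₁]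
    [TopologicalSpace.SeparableSpace H₁]
    [NormedAddCommGroup H₂] [InnerProductSpace ℂ H₂] [CompleteSpace H₂]
    [TopologicalSpace.SeparableSpace H₂]
    (T : H₁ →ₗ.[ℂ] H₂) (hdense : Dense (T.domain : Set H₁)) (hclosed : T.IsClosed)
    (hran : IsClosed (pran T)) :
    pran (pcomp T.adjoint T) = pran T.adjoint ∧ IsClosed (pran (pcomp T.adjoint T)) :=
  stmt0_general T hdense hclosed hran

end Paper
end

section
/- Let T : H₁ → H₂ be a closed densely defined operator and A = T*∘T. If the inclusion (D(T), graph norm of T) ↪ H₁ is a compact operator, then A is self-adjoint with discrete spectrum; equivalently the inclusion (D(A), graph norm of A) ↪ H₁ is a compact operator. -/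
/-!
For `u ∈ dom (T†T)` and `v ∈ dom T` one has `⟪T†T u, v⟫ = ⟪T u, T v⟫`, so `A = T†T` is symmetric
and nonnegative. Projecting `(y, 0)` orthogonally onto the closed graph of `T` gives `d ∈ dom T`
with `⟪y - d, t⟫ = ⟪T d, T t⟫` for all `t ∈ dom T`, i.e. `T d ∈ dom T†` and `d + T†T d = y`; so
`1 + A` is onto. A nonnegative symmetric operator with `1 + A` onto is densely defined and
self-adjoint. Finally `‖T u‖² = re ⟪A u, u⟫ ≤ ‖A u‖ ‖u‖` bounds the graph norm of `T` by
`√(3/2)` times that of `A`, so the unit ball of `dom A` lies in a dilate of the relatively compact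
unit ball of `dom T`.
-/

namespace Paper

/-- A (self-adjoint) operator has discrete spectrum (its spectrum consists of isolated
eigenvalues of finite multiplicity) if and only if the inclusion of its domain, endowed with
the graph norm, into the ambient Hilbert space is a compact operator; we take this compactness
property as the definition. -/
def HasDiscreteSpectrum {E F : Type*} [NormedAddCommGroup E] [InnerProductSpace ℂ E]
    [NormedAddCommGroup F] [InnerProductSpace ℂ F] (T : E →ₗ.[ℂ] F) : Prop :=
  IsCompact (closure ((fun u : T.domain => (u : E)) ''
    {u : T.domain | ‖(u : E)‖ ^ 2 + ‖T u‖ ^ 2 ≤ 1}))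

open scoped InnerProductSpace LinearPMap

section pcomp

variable {R E F G : Type*} [Ring R] [AddCommGroup E] [Module R E]
  [AddCommGroup F] [Module R F] [AddCommGroup G] [Module R G]
  (S : F →ₗ.[R] G) (T : E →ₗ.[R] F)

theorem mem_domain_pcomp_iff {x : E} :
    x ∈ (pcomp S T).domain ↔ ∃ hx : x ∈ T.domain, T ⟨x, hx⟩ ∈ S.domain := by
  simp only [pcomp, Submodule.mem_map, Submodule.mem_comap, Submodule.coe_subtype]
  constructor
  · rintro ⟨⟨y, hy⟩, hmem, rfl⟩
    exact ⟨hy, hmem⟩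
  · rintro ⟨hx, hmem⟩
    exact ⟨⟨x, hx⟩, hmem, rfl⟩

theorem domain_pcomp_le : (pcomp S T).domain ≤ T.domain :=
  fun _ hx => ((mem_domain_pcomp_iff S T).1 hx).1

theorem apply_mem_domain_of_mem_pcomp (u : (pcomp S T).domain) :
    T (Submodule.inclusion (domain_pcomp_le S T) u) ∈ S.domain :=
  ((mem_domain_pcomp_iff S T).1 u.2).2

theorem pcomp_apply_s15 (u : (pcomp S T).domain) :
    pcomp S T u = S ⟨T (Submodule.inclusion (domain_pcomp_le S T) u),
      apply_mem_domain_of_mem_pcomp S T u⟩ := by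
  have hu : ((Submodule.equivMapOfInjective T.domain.subtype
      (Submodule.injective_subtype T.domain) (S.domain.comap T.toFun)).symm u : T.domain) =
      Submodule.inclusion (domain_pcomp_le S T) u :=
    Subtype.ext (Submodule.map_equivMapOfInjective_symm_apply _ _ _ u)
  exact congrArg S.toFun (Subtype.ext (congrArg T.toFun hu))

end pcomp

section AdjointComp

variable {𝕜 E F : Type*} [RCLike 𝕜] [NormedAddCommGroup E] [InnerProductSpace 𝕜 E]
  [NormedAddCommGroup F] [InnerProductSpace 𝕜 F] [CompleteSpace E]
  {T : E →ₗ.[𝕜] F}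

theorem inner_pcomp_adjoint_self_apply (hT : Dense (T.domain : Set E))
    (u : (pcomp T† T).domain) (v : T.domain) :
    ⟪pcomp T† T u, (v : E)⟫_𝕜 = ⟪T (Submodule.inclusion (domain_pcomp_le _ T) u), T v⟫_𝕜 := by
  rw [pcomp_apply_s15]
  exact LinearPMap.adjoint_isFormalAdjoint hT _ v

theorem isFormalAdjoint_pcomp_adjoint_self (hT : Dense (T.domain : Set E)) :
    (pcomp T† T).IsFormalAdjoint (pcomp T† T) := by
  intro u v
  have h (a b : (pcomp T† T).domain) :=
    inner_pcomp_adjoint_self_apply hT a (Submodule.inclusion (domain_pcomp_le _ T) b)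
  simp only [Submodule.coe_inclusion] at h
  rw [← inner_conj_symm (u : E), h, h, inner_conj_symm]

theorem re_inner_pcomp_adjoint_self_apply_self (hT : Dense (T.domain : Set E))
    (u : (pcomp T† T).domain) :
    RCLike.re ⟪pcomp T† T u, (u : E)⟫_𝕜 = ‖T (Submodule.inclusion (domain_pcomp_le _ T) u)‖ ^ 2 := by
  rw [← inner_self_eq_norm_sq (𝕜 := 𝕜), ← inner_pcomp_adjoint_self_apply hT]
  rfl

theorem norm_sq_add_norm_apply_sq_le (hT : Dense (T.domain : Set E))
    (u : (pcomp T† T).domain) :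
    ‖(u : E)‖ ^ 2 + ‖T (Submodule.inclusion (domain_pcomp_le _ T) u)‖ ^ 2 ≤
      3 / 2 * (‖(u : E)‖ ^ 2 + ‖pcomp T† T u‖ ^ 2) := by
  have h : ‖T (Submodule.inclusion (domain_pcomp_le _ T) u)‖ ^ 2 ≤
      ‖pcomp T† T u‖ * ‖(u : E)‖ := by
    rw [← re_inner_pcomp_adjoint_self_apply_self hT]
    exact (RCLike.re_le_norm _).trans (norm_inner_le_norm _ _)
  nlinarith [sq_nonneg (‖pcomp T† T u‖ - ‖(u : E)‖)]

variable [CompleteSpace F]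

theorem exists_inner_sub_eq_inner_apply (hT : T.IsClosed) (y : E) :
    ∃ d : T.domain, ∀ t : T.domain, ⟪y - d, (t : E)⟫_𝕜 = ⟪T d, T t⟫_𝕜 := by
  set e := WithLp.prodContinuousLinearEquiv 2 𝕜 E F
  set K : Submodule 𝕜 (WithLp 2 (E × F)) := T.graph.comap e.toLinearMap
  have : CompleteSpace K := (hT.preimage e.continuous).completeSpace_coe
  obtain ⟨w, hwK, hw⟩ :=
    Submodule.HasOrthogonalProjection.exists_orthogonal (K := K) (e.symm (y, 0))
  obtain ⟨d, hd1, hd2⟩ := T.mem_graph_iff.mp hwK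
  refine ⟨d, fun t => ?_⟩
  have ht : e.symm ((t : E), T t) ∈ K := by simp [K]
  have h := (K.mem_orthogonal' _).1 hw _ ht
  rw [WithLp.prod_inner_apply] at h
  simp only [WithLp.prodContinuousLinearEquiv_symm_apply, WithLp.ofLp_sub, Prod.fst_sub,
    WithLp.ofLp_fst, Prod.snd_sub, WithLp.ofLp_snd, zero_sub, inner_neg_left, LinearEquiv.coe_coe,
    ContinuousLinearEquiv.coe_toLinearEquiv, WithLp.prodContinuousLinearEquiv_apply, e]
    at h hd1 hd2
  rw [hd1, hd2]
  linear_combination h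

theorem exists_add_pcomp_adjoint_self_apply_eq (hdense : Dense (T.domain : Set E))
    (hclosed : T.IsClosed) (y : E) : ∃ u : (pcomp T† T).domain, (u : E) + pcomp T† T u = y := by
  obtain ⟨d, hd⟩ := exists_inner_sub_eq_inner_apply hclosed y
  have hTd : T d ∈ T†.domain := T.mem_adjoint_domain_of_exists _ ⟨y - d, hd⟩
  have hdA : (d : E) ∈ (pcomp T† T).domain := (mem_domain_pcomp_iff _ _).2 ⟨d.2, hTd⟩
  refine ⟨⟨d, hdA⟩, ?_⟩
  rw [pcomp_apply_s15, LinearPMap.adjoint_apply_eq hdense _ hd]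
  abel

end AdjointComp

section SelfAdjoint

variable {𝕜 E : Type*} [RCLike 𝕜] [NormedAddCommGroup E] [InnerProductSpace 𝕜 E]
  [CompleteSpace E] {A : E →ₗ.[𝕜] E}

theorem dense_domain_of_forall_exists_add_apply_eq
    (hpos : ∀ u : A.domain, 0 ≤ RCLike.re ⟪A u, (u : E)⟫_𝕜)
    (hsurj : ∀ y : E, ∃ u : A.domain, (u : E) + A u = y) : Dense (A.domain : Set E) := by
  rw [Submodule.dense_iff_topologicalClosure_eq_top, Submodule.topologicalClosure_eq_top_iff,
    Submodule.eq_bot_iff]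
  intro y hy
  obtain ⟨u, rfl⟩ := hsurj y
  have h0 : ⟪(u : E) + A u, (u : E)⟫_𝕜 = 0 := (Submodule.mem_orthogonal' _ _).1 hy u u.2
  have hu : u = 0 := by
    have hre := congrArg RCLike.re h0
    rw [inner_add_left, map_add, inner_self_eq_norm_sq, map_zero] at hre
    have := hpos u
    exact Subtype.ext (norm_eq_zero.1 (by nlinarith [norm_nonneg (u : E)]))
  simp [hu]

theorem adjoint_eq_self_of_forall_exists_add_apply_eq (hA : Dense (A.domain : Set E))
    (hsymm : A.IsFormalAdjoint A) (hsurj : ∀ y : E, ∃ u : A.domain, (u : E) + A u = y) :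
    A† = A := by
  have hle : A ≤ A† := hsymm.le_adjoint hA
  refine (LinearPMap.eq_of_le_of_domain_eq hle (le_antisymm hle.1 fun u hu => ?_)).symm
  obtain ⟨w, hw⟩ := hsurj (u + A† ⟨u, hu⟩)
  have horth : ∀ s : A.domain, ⟪u - w, (s : E) + A s⟫_𝕜 = 0 := by
    intro s
    have hu' : ⟪u, (s : E) + A s⟫_𝕜 = ⟪u + A† ⟨u, hu⟩, (s : E)⟫_𝕜 := by
      rw [inner_add_right, inner_add_left, LinearPMap.adjoint_isFormalAdjoint hA ⟨u, hu⟩ s]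
    have hw' : ⟪(w : E), (s : E) + A s⟫_𝕜 = ⟪(w : E) + A w, (s : E)⟫_𝕜 := by
      rw [inner_add_right, inner_add_left, hsymm w s]
    rw [inner_sub_left, hu', hw', hw, sub_self]
  obtain ⟨s, hs⟩ := hsurj (u - w)
  have := horth s
  rw [hs, inner_self_eq_zero, sub_eq_zero] at this
  exact this ▸ w.2

end SelfAdjoint

theorem HasDiscreteSpectrum.of_domain_le {E F G : Type*} [NormedAddCommGroup E]
    [InnerProductSpace ℂ E] [NormedAddCommGroup F] [InnerProductSpace ℂ F]
    [NormedAddCommGroup G] [InnerProductSpace ℂ G] {T : E →ₗ.[ℂ] F} {A : E →ₗ.[ℂ] G}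
    (hT : HasDiscreteSpectrum T) (hle : A.domain ≤ T.domain) {C : ℝ} (hC : 0 < C)
    (hbound : ∀ u : A.domain, ‖(u : E)‖ ^ 2 + ‖T (Submodule.inclusion hle u)‖ ^ 2 ≤
      C * (‖(u : E)‖ ^ 2 + ‖A u‖ ^ 2)) :
    HasDiscreteSpectrum A := by
  set c : ℝ := √C
  have hc : 0 < c := Real.sqrt_pos.2 hC
  have hK := hT.image (continuous_const_smul (c : ℂ))
  refine hK.of_isClosed_subset isClosed_closure (closure_minimal ?_ hK.isClosed)
  rintro _ ⟨u, hu, rfl⟩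
  set v : T.domain := (c : ℂ)⁻¹ • Submodule.inclusion hle u
  have hv : ‖(v : E)‖ ^ 2 + ‖T v‖ ^ 2 ≤ 1 := by
    have hnorm : ‖(c : ℂ)⁻¹‖ ^ 2 = C⁻¹ := by
      rw [norm_inv, Complex.norm_real, Real.norm_of_nonneg hc.le, inv_pow, Real.sq_sqrt hC.le]
    calc ‖(v : E)‖ ^ 2 + ‖T v‖ ^ 2
        = C⁻¹ * (‖(u : E)‖ ^ 2 + ‖T (Submodule.inclusion hle u)‖ ^ 2) := by
          simp only [v, LinearPMap.map_smul, Submodule.coe_smul, Submodule.coe_inclusion, norm_smul,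
            mul_pow, hnorm]
          ring
      _ ≤ C⁻¹ * (C * 1) := by gcongr; exact (hbound u).trans (by gcongr; exact hu)
      _ = 1 := by field_simp
  refine ⟨v, subset_closure ⟨v, hv, rfl⟩, ?_⟩
  show (c : ℂ) • ((c : ℂ)⁻¹ • (u : E)) = u
  rw [smul_inv_smul₀ (by exact_mod_cast hc.ne')]

/-- Let `T : H₁ → H₂` be a closed densely defined operator and `A = T†∘T`.
If the inclusion `(dom T, graph norm of T) ↪ H₁` is a compact operator, then `A` is
self-adjoint with discrete spectrum; equivalently the inclusion `(dom A, graph norm of A) ↪ H₁`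
is a compact operator (which is how `HasDiscreteSpectrum` is defined here). -/
theorem stmt15 {H₁ H₂ : Type*}
    [NormedAddCommGroup H₁] [InnerProductSpace ℂ H₁] [CompleteSpace H₁]
    [NormedAddCommGroup H₂] [InnerProductSpace ℂ H₂] [CompleteSpace H₂]
    (T : H₁ →ₗ.[ℂ] H₂) (hdense : Dense (T.domain : Set H₁)) (hclosed : T.IsClosed)
    (hcpt : IsCompact (closure ((fun u : T.domain => (u : H₁)) ''
      {u : T.domain | ‖(u : H₁)‖ ^ 2 + ‖T u‖ ^ 2 ≤ 1}))) :
    (pcomp T.adjoint T).adjoint = pcomp T.adjoint T ∧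
      HasDiscreteSpectrum (pcomp T.adjoint T) := by
  have hsurj := exists_add_pcomp_adjoint_self_apply_eq hdense hclosed
  have hnonneg (u : (pcomp T† T).domain) : 0 ≤ RCLike.re ⟪pcomp T† T u, (u : H₁)⟫_ℂ := by
    rw [re_inner_pcomp_adjoint_self_apply_self hdense]
    positivity
  have hAdense := dense_domain_of_forall_exists_add_apply_eq hnonneg hsurj
  exact ⟨adjoint_eq_self_of_forall_exists_add_apply_eq hAdense
      (isFormalAdjoint_pcomp_adjoint_self hdense) hsurj,
    HasDiscreteSpectrum.of_domain_le hcpt (domain_pcomp_le _ _) (by norm_num)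
      (norm_sq_add_norm_apply_sq_le hdense)⟩

end Paper
end
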